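/- Let N ≥ 1 and let a₁, …, a_N ∈ ℝ⁴, writing a_k = (a_k⁰, a_k¹, a_k², a_k³). Let M ≥ 0, κ > 0 and δ > 0 and assume: (i) a_k⁰ > 0 for every k; (ii) |a_k^j| ≤ M·a_k⁰ for every k and every j ∈ {1,2,3}; (iii) |Σ_{k=1}^N a_k^i·a_k^j − δ^{ij}| ≤ κ for all i, j ∈ {0,1,2,3}, where δ^{ij} is the Kronecker delta; (iv) 100·(M+1)·(κ+δ) ≤ 1. Then for every w = (w⁰, w¹, w², w³) ∈ ℝ⁴ with w⁰ = 1 and |w^j| ≤ δ for j = 1,2,3, there exists ω ∈ ℝ⁴ such that the numbers x_k := ⟨a_k, ω⟩ satisfy x_k > 0 for every k and Σ_{k=1}^N a_k^i·x_k = w^i for every i ∈ {0,1,2,3}. -/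

import Mathlib

/-!
The Gram matrix `G = AᵀA` is within `4κ` of the identity in the `ℓ^∞` operator norm, so
`G ω = w` is solvable with `‖ω - w‖_∞ ≤ 5κ`. Hence `ω⁰ ≥ 1 - 5κ` while `|ωʲ| ≤ δ + 5κ`, and
the dominance `|a_kʲ| ≤ M a_k⁰` makes `⟨a_k, ω⟩ ≥ a_k⁰ (ω⁰ - 3M(δ + 5κ)) > 0`.
-/

open Finset

attribute [local instance] Matrix.linftyOpNormedAddCommGroup

namespace Matrix

theorem linfty_opNorm_le_card_mul_of_abs_le {m n : Type*} [Fintype m] [Fintype n]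
    {A : Matrix m n ℝ} {κ : ℝ} (hκ : 0 ≤ κ) (h : ∀ i j, |A i j| ≤ κ) :
    ‖A‖ ≤ Fintype.card n * κ := by
  change ‖fun i => WithLp.toLp 1 (A i)‖ ≤ _
  refine (pi_norm_le_iff_of_nonneg (by positivity)).2 fun i => ?_
  rw [PiLp.norm_eq_of_L1]
  simpa [Real.norm_eq_abs] using sum_le_sum fun j (_ : j ∈ univ) => h i j

variable {n : Type*} [Fintype n] [DecidableEq n] {G : Matrix n n ℝ}

theorem one_sub_norm_mul_norm_sub_le {ω w : n → ℝ} (h : G *ᵥ ω = w) :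
    (1 - ‖G - 1‖) * ‖ω - w‖ ≤ ‖G - 1‖ * ‖w‖ := by
  have hdiff : ω - w = -((G - 1) *ᵥ ω) := by
    rw [sub_mulVec, one_mulVec, h]; abel
  have hle : ‖ω - w‖ ≤ ‖G - 1‖ * ‖ω‖ := by
    rw [hdiff, norm_neg]; exact linfty_opNorm_mulVec _ _
  have htri : ‖ω‖ ≤ ‖w‖ + ‖ω - w‖ := norm_le_norm_add_norm_sub' ω w
  nlinarith [norm_nonneg (G - 1)]

theorem mulVec_surjective_of_norm_sub_one_lt (hG : ‖G - 1‖ < 1) :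
    Function.Surjective G.mulVec := by
  refine mulVec_surjective_iff_isUnit.2 (mulVec_injective_iff_isUnit.1 fun v v' hvv' => ?_)
  have h0 : G *ᵥ (v - v') = 0 := by rw [mulVec_sub, hvv', sub_self]
  have hbound := one_sub_norm_mul_norm_sub_le h0
  rw [sub_zero, norm_zero, mul_zero] at hbound
  have hnorm : ‖v - v'‖ ≤ 0 := by nlinarith [norm_nonneg (v - v')]
  exact sub_eq_zero.1 (norm_le_zero_iff.1 hnorm)

end Matrix

theorem sum_mul_pos_of_dominant_coord {n : Type*} [Fintype n] [DecidableEq n] {a ω : n → ℝ}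
    (i₀ : n) {M ρ : ℝ} (ha : 0 < a i₀) (ha_dom : ∀ j ≠ i₀, |a j| ≤ M * a i₀)
    (hω : ∀ j ≠ i₀, |ω j| ≤ ρ) (hω₀ : (Fintype.card n - 1 : ℝ) * M * ρ < ω i₀) :
    0 < ∑ j, a j * ω j := by
  have hrest : ∑ j ∈ univ.erase i₀, |a j * ω j| ≤ (Fintype.card n - 1 : ℝ) * (M * a i₀ * ρ) :=
    calc ∑ j ∈ univ.erase i₀, |a j * ω j| ≤ ∑ j ∈ univ.erase i₀, M * a i₀ * ρ := by
          refine sum_le_sum fun j hj => ?_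
          have hj := ne_of_mem_erase hj
          rw [abs_mul]
          exact mul_le_mul (ha_dom j hj) (hω j hj) (abs_nonneg _)
            ((abs_nonneg _).trans (ha_dom j hj))
      _ = _ := by
          rw [sum_const, card_erase_of_mem (mem_univ _), card_univ, nsmul_eq_mul,
            Nat.cast_pred (Fintype.card_pos_iff.2 ⟨i₀⟩)]
  have hsum := (neg_le_neg (abs_sum_le_sum_abs (fun j => a j * ω j) (univ.erase i₀))).trans
    (neg_abs_le _)
  rw [← add_sum_erase _ _ (mem_univ i₀)]
  nlinarith [mul_pos ha (sub_pos.2 hω₀)]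

open Matrix in
theorem moment_problem_positive_solvability_general
    (N : ℕ) (a : Fin N → Fin 4 → ℝ)
    (M κ δ : ℝ) (hM : 0 ≤ M)
    (hpos : ∀ k, 0 < a k 0)
    (hcomp : ∀ k, ∀ j : Fin 4, j ≠ 0 → |a k j| ≤ M * a k 0)
    (hgram : ∀ i j : Fin 4,
      |(∑ k, a k i * a k j) - (if i = j then 1 else 0)| ≤ κ)
    (hsmall : 100 * (M + 1) * (κ + δ) ≤ 1) :
    ∀ w : Fin 4 → ℝ, w 0 = 1 → (∀ j : Fin 4, j ≠ 0 → |w j| ≤ δ) →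
      ∃ ω : Fin 4 → ℝ,
        (∀ k, 0 < ∑ j, a k j * ω j) ∧
        (∀ i : Fin 4, (∑ k, a k i * (∑ j, a k j * ω j)) = w i) := by
  intro w hw0 hwj
  set A : Matrix (Fin N) (Fin 4) ℝ := of a
  have hκ : 0 ≤ κ := (abs_nonneg _).trans (hgram 0 0)
  have hδ : 0 ≤ δ := (abs_nonneg _).trans (hwj 1 (by decide))
  have hmoment (v : Fin 4 → ℝ) (i : Fin 4) :
      ∑ k, a k i * ∑ j, a k j * v j = ((Aᵀ * A) *ᵥ v) i := by
    rw [← mulVec_mulVec]; rfl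
  have hκ_small : κ ≤ 1 / 100 := by nlinarith [mul_nonneg hM hκ, mul_nonneg hM hδ]
  have hG : ‖Aᵀ * A - 1‖ ≤ 4 * κ := by
    have := linfty_opNorm_le_card_mul_of_abs_le hκ fun i j => by
      simpa [A, mul_apply, one_apply] using hgram i j
    rwa [Fintype.card_fin, Nat.cast_ofNat] at this
  have hw : ‖w‖ ≤ 1 := (pi_norm_le_iff_of_nonneg zero_le_one).2 fun j => by
    rcases eq_or_ne j 0 with rfl | hj
    · simp [hw0]
    · rw [Real.norm_eq_abs]; nlinarith [hwj j hj]
  obtain ⟨ω, hω⟩ := mulVec_surjective_of_norm_sub_one_lt (G := Aᵀ * A) (by nlinarith) w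
  have hnear : ∀ j, |ω j - w j| ≤ 5 * κ := by
    have hbound := one_sub_norm_mul_norm_sub_le hω
    have : ‖ω - w‖ ≤ 5 * κ := by
      nlinarith [mul_le_mul_of_nonneg_left hw (norm_nonneg (Aᵀ * A - 1)),
        mul_nonneg (by linarith : 0 ≤ 1 / 25 - ‖Aᵀ * A - 1‖) (norm_nonneg (ω - w))]
    exact fun j => (norm_le_pi_norm (ω - w) j).trans this
  refine ⟨ω, fun k => sum_mul_pos_of_dominant_coord 0 (hpos k) (hcomp k) (ρ := δ + 5 * κ)
    (fun j hj => ?_) ?_, fun i => (hmoment ω i).trans (congrFun hω i)⟩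
  · linarith [abs_sub_abs_le_abs_sub (ω j) (w j), hnear j, hwj j hj]
  · have := (abs_le.1 (hnear 0)).1
    simp only [Fintype.card_fin, Nat.cast_ofNat, hw0] at this ⊢
    nlinarith [mul_nonneg hM hκ, mul_nonneg hM hδ]

/-- **Finite-dimensional solvability with positivity** (abstract mesh argument,
Section 1.4 of the paper). Given vectors `a₁, …, a_N ∈ ℝ⁴` with positive `0`-th
components, controlled remaining components, and Gram matrix `κ`-close to the
identity, every moment vector `w` with `w⁰ = 1` and `|wʲ| ≤ δ` (`j = 1,2,3`) is
realized by positive coefficients `x_k = ⟨a_k, ω⟩` for some `ω ∈ ℝ⁴`. -/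
theorem moment_problem_positive_solvability
    (N : ℕ) (hN : 1 ≤ N) (a : Fin N → Fin 4 → ℝ)
    (M κ δ : ℝ) (hM : 0 ≤ M) (hκ : 0 < κ) (hδ : 0 < δ)
    (hpos : ∀ k, 0 < a k 0)
    (hcomp : ∀ k, ∀ j : Fin 4, j ≠ 0 → |a k j| ≤ M * a k 0)
    (hgram : ∀ i j : Fin 4,
      |(∑ k, a k i * a k j) - (if i = j then 1 else 0)| ≤ κ)
    (hsmall : 100 * (M + 1) * (κ + δ) ≤ 1) :
    ∀ w : Fin 4 → ℝ, w 0 = 1 → (∀ j : Fin 4, j ≠ 0 → |w j| ≤ δ) →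
      ∃ ω : Fin 4 → ℝ,
        (∀ k, 0 < ∑ j, a k j * ω j) ∧
        (∀ i : Fin 4, (∑ k, a k i * (∑ j, a k j * ω j)) = w i) :=
  moment_problem_positive_solvability_general N a M κ δ hM hpos hcomp hgram hsmall
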